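/- arXiv:hep-th/9802192 — 2 statements merged into one kernel-verified Lean document; each statement's English description precedes it below -/
import Mathlib

section
/- Let $G$ be a Lie group with Maurer–Cartan forms $\omega^i$, $k$ a symmetric ad-invariant $m$-tensor on $\mathfrak{g}$, and for a subalgebra $\mathcal{H}\subset\mathfrak{g}$ with basis indices $\alpha$, define $\Omega'_{(p)\alpha_1\dots\alpha_{p-1}} = k_{\alpha_1\dots\alpha_{p-1} i_p\dots i_{m-1} i_m}\, d\omega^{i_p}\wedge\cdots\wedge d\omega^{i_{m-1}}\wedge\omega^{i_m}$ and $\Pi'_{(p)\alpha_1\dots\alpha_p} = k_{\alpha_1\dots\alpha_p i_{p+1}\dots i_m}\, d\omega^{i_{p+1}}\wedge\cdots\wedge d\omega^{i_m}$. Then $d\Omega'_{(p)\alpha_1\dots\alpha_{p-1}} = \Pi'_{(p-1)\alpha_1\dots\alpha_{p-1}}$, and the symmetrized contraction satisfies $i_{\{\alpha_p}\Omega'_{(p)\alpha_1\dots\alpha_{p-1}\}} = \frac{2m-p}{p}\, \Pi'_{(p)\alpha_1\dots\alpha_p} = \frac{2m-p}{p}\, d\Omega'_{(p+1)\alpha_1\dots\alpha_p}$,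 where $i_\alpha$ is contraction with the left-invariant vector field $X_\alpha$ and curly brackets denote symmetrization with weight $1/p$ over $\alpha_1,\dots,\alpha_p$. -/
open Finset List

set_option linter.unusedSectionVars false
namespace GWZW

variable {ιG : Type*} [Fintype ιG] [DecidableEq ιG] [Inhabited ιG]
variable {Λ : Type*} [Ring Λ] [Algebra ℝ Λ]

theorem perm1 {γ : Type*} {n : ℕ} (y : Fin (n+1) → γ) (w : Fin (n+1)) :
    (List.ofFn y).Perm (y w :: List.ofFn (fun t => y (w.succAbove t))) := by
  induction n with
  | zero =>
      have hw : w = 0 := Fin.fin_one_eq_zero w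
      subst hw
      simp
  | succ n ih =>
      refine Fin.cases ?_ ?_ w
      · rw [List.ofFn_succ]
        simp only [Fin.zero_succAbove]
        exact List.Perm.refl _
      · intro w'
        have hA : (List.ofFn y).Perm
            (y 0 :: (y (w'.succ) :: List.ofFn fun t => y (w'.succAbove t).succ)) := by
          rw [List.ofFn_succ]
          exact (ih (fun t => y t.succ) w').cons (y 0)
        refine hA.trans ?_
        refine (List.Perm.swap (y w'.succ) (y 0) _).trans ?_
        refine List.Perm.cons _ (List.Perm.of_eq ?_)
        rw [List.ofFn_succ]
        simp [Fin.succ_succAbove_succ, Fin.succ_succAbove_zero]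

theorem ofFn_set {γ : Type*} {n : ℕ} (f : Fin n → γ) (u : ℕ) (hu : u < n) (v : γ) :
    (List.ofFn f).set u v = List.ofFn (Function.update f ⟨u, hu⟩ v) := by
  apply List.ext_getElem
  · simp
  · intro i h1 h2
    simp only [List.getElem_set, List.getElem_ofFn, Function.update_apply]
    by_cases h : u = i
    · subst h; simp
    · rw [if_neg h, if_neg]
      simp only [Fin.mk.injEq]
      omega

theorem sum_range_add' {M : Type*} [AddCommMonoid M] (f : ℕ → M) (a b : ℕ) :
    ∑ r ∈ Finset.range (a + b), f r
      = (∑ r ∈ Finset.range a, f r) + ∑ u ∈ Finset.range b, f (a + u) := by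
  induction b with
  | zero => simp
  | succ b ih => rw [← Nat.add_assoc, Finset.sum_range_succ, ih, Finset.sum_range_succ, add_assoc]

theorem sum_pi_succ {M : Type*} [AddCommMonoid M] {n : ℕ} (F : (Fin (n+1) → ιG) → M) :
    ∑ g : Fin (n+1) → ιG, F g = ∑ j : ιG, ∑ g : Fin n → ιG, F (Fin.cons j g) := by
  rw [← Equiv.sum_comp (Fin.consEquiv fun _ => ιG) F, Fintype.sum_prod_type]
  rfl

theorem group_sum {M : Type*} [AddCommMonoid M] {p' : ℕ} (F : Fin (p'+1) → M) :
    ∑ σ : Equiv.Perm (Fin (p'+1)), F (σ (Fin.last p'))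
      = p'.factorial • ∑ w, F w := by
  have h0 : ∑ σ : Equiv.Perm (Fin (p'+1)), F (σ (Fin.last p'))
      = ∑ σ : Equiv.Perm (Fin (p'+1)), F (σ 0) := by
    rw [← Equiv.sum_comp (Equiv.mulRight (Equiv.swap (0 : Fin (p'+1)) (Fin.last p')))
      (fun σ => F (σ 0))]
    apply Finset.sum_congr rfl
    intro σ _
    simp [Equiv.Perm.mul_apply]
  rw [h0, ← Equiv.sum_comp (Equiv.Perm.decomposeFin.symm) (fun σ => F (σ 0)),
    Fintype.sum_prod_type]
  simp only [Equiv.Perm.decomposeFin_symm_apply_zero]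
  rw [Finset.sum_comm]
  simp [Finset.sum_const, Finset.card_univ, Fintype.card_perm]


section Main

variable (k : List ιG → ℝ) (C : ιG → ιG → ιG → ℝ) (ω dω : ιG → Λ)

/-- `S n A = Σ_g k(A ++ G) dω^{g_1}…dω^{g_n}` -/
def S (n : ℕ) (A : List ιG) : Λ :=
  ∑ g : Fin n → ιG,
    k (A ++ List.ofFn fun t : Fin n => g t) • (List.ofFn fun t : Fin n => dω (g t)).prod

/-- `W n A = Σ_{g,im} k(A ++ G ++ [im]) dω^{g_1}…dω^{g_n} ω^{im}` -/
def W (n : ℕ) (A : List ιG) : Λ :=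
  ∑ g : Fin n → ιG, ∑ im : ιG,
    k (A ++ (List.ofFn fun t : Fin n => g t) ++ [im])
      • ((List.ofFn fun t : Fin n => dω (g t)).prod * ω im)

/-- `M E q A = Σ_j E^j W q (A ++ [j])` -/
def M (E : ιG → Λ) (q : ℕ) (A : List ιG) : Λ := ∑ j : ιG, E j * W k ω dω q (A ++ [j])

section Comm

theorem comm_ωω (hωa : ∀ a b, ω a * ω b = - (ω b * ω a)) (a b c : ιG) : ω a * (ω b * ω c) = (ω b * ω c) * ω a := by
  rw [← mul_assoc, hωa a b, neg_mul, mul_assoc, hωa a c, mul_neg, neg_neg, mul_assoc]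

variable {hh : ℕ}

theorem comm_dω_ω (hωa : ∀ a b, ω a * ω b = - (ω b * ω a))
    (hdωdef : ∀ a, dω a = - (1/2 : ℝ) • ∑ b, ∑ c, C a b c • (ω b * ω c)) (a b : ιG) : Commute (dω a) (ω b) := by
  rw [hdωdef a]
  refine ((Commute.sum_right _ _ _ ?_).smul_right _).symm
  intro c _
  refine Commute.sum_right _ _ _ ?_
  intro e _
  exact (Commute.smul_right (comm_ωω ω hωa b c e) _)

theorem comm_dω_dω (hωa : ∀ a b, ω a * ω b = - (ω b * ω a))
    (hdωdef : ∀ a, dω a = - (1/2 : ℝ) • ∑ b, ∑ c, C a b c • (ω b * ω c)) (a b : ιG) : Commute (dω a) (dω b) := by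
  conv_rhs => rw [hdωdef b]
  refine (Commute.sum_right _ _ _ ?_).smul_right _
  intro c _
  refine Commute.sum_right _ _ _ ?_
  intro e _
  refine Commute.smul_right ?_ _
  exact ((comm_dω_ω C ω dω hωa hdωdef a c).mul_right (comm_dω_ω C ω dω hωa hdωdef a e))

theorem comm_prod_ω (hωa : ∀ a b, ω a * ω b = - (ω b * ω a))
    (hdωdef : ∀ a, dω a = - (1/2 : ℝ) • ∑ b, ∑ c, C a b c • (ω b * ω c))
    {n : ℕ} (g : Fin n → ιG) (b : ιG) :
    Commute (ω b) (List.ofFn fun t : Fin n => dω (g t)).prod := by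
  refine Commute.list_prod_right _ _ ?_
  intro x hx
  rw [List.mem_ofFn] at hx
  obtain ⟨t, rfl⟩ := hx
  exact (comm_dω_ω C ω dω hωa hdωdef (g t) b).symm

end Comm

section Rec

variable (hksym : ∀ l1 l2 : List ιG, l1.Perm l2 → k l1 = k l2)

include hksym in
theorem S_perm {n : ℕ} {A1 A2 : List ιG} (h : A1.Perm A2) : S k dω n A1 = S k dω n A2 := by
  unfold S
  refine Finset.sum_congr rfl fun g _ => ?_
  rw [hksym _ _ (h.append_right _)]

include hksym in
theorem W_perm {n : ℕ} {A1 A2 : List ιG} (h : A1.Perm A2) : W k ω dω n A1 = W k ω dω n A2 := by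
  unfold W
  refine Finset.sum_congr rfl fun g _ => Finset.sum_congr rfl fun im _ => ?_
  rw [hksym _ _ ((h.append_right _).append_right _)]

theorem S_zero (A : List ιG) : S k dω 0 A = k A • 1 := by
  unfold S
  rw [Fintype.sum_unique]
  simp

theorem W_zero (A : List ιG) : W k ω dω 0 A = ∑ im : ιG, k (A ++ [im]) • ω im := by
  unfold W
  rw [Fintype.sum_unique]
  simp

theorem S_succ (n : ℕ) (A : List ιG) :
    S k dω (n+1) A = ∑ j : ιG, dω j * S k dω n (A ++ [j]) := by
  unfold S
  rw [sum_pi_succ]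
  refine Finset.sum_congr rfl fun j _ => ?_
  rw [Finset.mul_sum]
  refine Finset.sum_congr rfl fun g _ => ?_
  have h1 : (List.ofFn fun t : Fin (n+1) => (Fin.cons j g : Fin (n+1) → ιG) t) = j :: List.ofFn fun t : Fin n => g t := by
    rw [List.ofFn_succ]; simp
  have h2 : (List.ofFn fun t : Fin (n+1) => dω ((Fin.cons j g : Fin (n+1) → ιG) t))
      = dω j :: List.ofFn fun t : Fin n => dω (g t) := by
    rw [List.ofFn_succ]; simp
  rw [h1, h2, List.prod_cons, mul_smul_comm, List.append_cons]

theorem W_succ (n : ℕ) (A : List ιG) :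
    W k ω dω (n+1) A = ∑ j : ιG, dω j * W k ω dω n (A ++ [j]) := by
  unfold W
  rw [sum_pi_succ]
  refine Finset.sum_congr rfl fun j _ => ?_
  rw [Finset.mul_sum]
  refine Finset.sum_congr rfl fun g _ => ?_
  rw [Finset.mul_sum]
  refine Finset.sum_congr rfl fun im _ => ?_
  have h1 : (List.ofFn fun t : Fin (n+1) => (Fin.cons j g : Fin (n+1) → ιG) t) = j :: List.ofFn fun t : Fin n => g t := by
    rw [List.ofFn_succ]; simp
  have h2 : (List.ofFn fun t : Fin (n+1) => dω ((Fin.cons j g : Fin (n+1) → ιG) t))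
      = dω j :: List.ofFn fun t : Fin n => dω (g t) := by
    rw [List.ofFn_succ]; simp
  rw [h1, h2, List.prod_cons, mul_assoc, mul_smul_comm, List.append_cons A j]

end Rec



theorem rot3g {A B Cc : Type*}
    {Mo : Type*} [AddCommMonoid Mo] (sa : Finset A) (sb : Finset B) (sc : Finset Cc)
    (f : A → B → Cc → Mo) :
    ∑ a ∈ sa, ∑ b ∈ sb, ∑ c ∈ sc, f a b c = ∑ b ∈ sb, ∑ c ∈ sc, ∑ a ∈ sa, f a b c := by
  rw [Finset.sum_comm]
  exact Finset.sum_congr rfl fun b _ => Finset.sum_comm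

theorem rot3 {A B Cc : Type*} [Fintype A] [Fintype B] [Fintype Cc]
    {Mo : Type*} [AddCommMonoid Mo] (f : A → B → Cc → Mo) :
    ∑ a, ∑ b, ∑ c, f a b c = ∑ b, ∑ c, ∑ a, f a b c :=
  rot3g _ _ _ f

theorem rot3' {A B Cc : Type*} [Fintype A] [Fintype B] [Fintype Cc]
    {Mo : Type*} [AddCommMonoid Mo] (f : A → B → Cc → Mo) :
    ∑ a, ∑ b, ∑ c, f a b c = ∑ c, ∑ a, ∑ b, f a b c := by
  rw [rot3]
  exact rot3 (fun b c a => f a b c)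

section DicY

variable (hksym : ∀ l1 l2 : List ιG, l1.Perm l2 → k l1 = k l2)

include hksym in
theorem M_succ (E : ιG → Λ) (hEcomm : ∀ a j, Commute (dω a) (E j)) (q : ℕ) (A : List ιG) :
    M k ω dω E (q+1) A = ∑ j : ιG, dω j * M k ω dω E q (A ++ [j]) := by
  unfold M
  have h1 : ∑ j' : ιG, E j' * W k ω dω (q+1) (A ++ [j'])
      = ∑ j' : ιG, ∑ j : ιG, E j' * (dω j * W k ω dω q (A ++ [j'] ++ [j])) := by
    refine Finset.sum_congr rfl fun j' _ => ?_
    rw [W_succ, Finset.mul_sum]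
  rw [h1, Finset.sum_comm]
  refine Finset.sum_congr rfl fun j _ => ?_
  rw [Finset.mul_sum]
  refine Finset.sum_congr rfl fun j' _ => ?_
  have hW : W k ω dω q (A ++ [j'] ++ [j]) = W k ω dω q (A ++ [j] ++ [j']) := by
    refine W_perm k ω dω hksym ?_
    rw [List.append_assoc, List.append_assoc]
    exact List.Perm.append_left A (List.Perm.swap j j' [])
  rw [hW, ← mul_assoc, ← (hEcomm j j').eq, mul_assoc]

variable (dd : Λ →ₗ[ℝ] Λ)
variable (hd_ω : ∀ a, dd (ω a) = dω a)
variable (hd_even : ∀ a (y : Λ), dd (dω a * y) = dω a * dd y)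

include hd_ω hd_even in
theorem d_W (n : ℕ) (A : List ιG) : dd (W k ω dω n A) = S k dω (n+1) A := by
  induction n generalizing A with
  | zero =>
      rw [W_zero, map_sum, S_succ]
      refine Finset.sum_congr rfl fun im _ => ?_
      rw [map_smul, hd_ω, S_zero, mul_smul_comm, mul_one]
  | succ n ih =>
      rw [W_succ, map_sum, S_succ]
      refine Finset.sum_congr rfl fun j _ => ?_
      rw [hd_even, ih]

theorem Y_zero (hωa : ∀ a b, ω a * ω b = - (ω b * ω a))
    (hdωdef : ∀ a, dω a = - (1/2 : ℝ) • ∑ b, ∑ c, C a b c • (ω b * ω c))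
    (hjac : ∀ a b c e, ∑ j, (C a j b * C j c e + C a j c * C j e b + C a j e * C j b c) = 0)
    (hanti : ∀ a b c, C a b c = - C a c b)
    (b : ιG) :
    ∑ l : ιG, ∑ j : ιG, C b l j • (ω l * dω j) = 0 := by
  set T : ιG → ιG → ιG → ℝ := fun l c e => ∑ j, C b l j * C j c e with hT
  have hcyc : ∀ (T' : ιG → ιG → ιG → ℝ),
      ∑ l : ιG, ∑ c : ιG, ∑ e : ιG, T' l c e • (ω l * (ω c * ω e))
        = ∑ l : ιG, ∑ c : ιG, ∑ e : ιG, T' e l c • (ω l * (ω c * ω e)) := by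
    intro T'
    calc ∑ l : ιG, ∑ c : ιG, ∑ e : ιG, T' l c e • (ω l * (ω c * ω e))
        = ∑ c : ιG, ∑ e : ιG, ∑ l : ιG, T' l c e • (ω l * (ω c * ω e)) := by
          rw [Finset.sum_comm]
          exact Finset.sum_congr rfl fun c _ => Finset.sum_comm
      _ = ∑ c : ιG, ∑ e : ιG, ∑ l : ιG, T' l c e • (ω c * (ω e * ω l)) := by
          refine Finset.sum_congr rfl fun c _ => Finset.sum_congr rfl fun e _ =>
            Finset.sum_congr rfl fun l _ => ?_
          rw [comm_ωω ω hωa l c e, mul_assoc]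
      _ = ∑ l : ιG, ∑ c : ιG, ∑ e : ιG, T' e l c • (ω l * (ω c * ω e)) := rfl
  have hexp : ∑ l : ιG, ∑ j : ιG, C b l j • (ω l * dω j)
      = ∑ l : ιG, ∑ c : ιG, ∑ e : ιG,
          ((-(1/2) : ℝ) * T l c e) • (ω l * (ω c * ω e)) := by
    refine Finset.sum_congr rfl fun l _ => ?_
    have e2 : ∀ j : ιG, C b l j • (ω l * dω j)
        = ∑ c : ιG, ∑ e : ιG, ((C b l j * (-(1/2) * C j c e)) : ℝ) • (ω l * (ω c * ω e)) := by
      intro j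
      have e1 : ω l * dω j
          = ∑ c : ιG, ∑ e : ιG, ((-(1/2) * C j c e : ℝ)) • (ω l * (ω c * ω e)) := by
        rw [hdωdef j, mul_smul_comm, Finset.mul_sum, Finset.smul_sum]
        refine Finset.sum_congr rfl fun c _ => ?_
        rw [Finset.mul_sum, Finset.smul_sum]
        refine Finset.sum_congr rfl fun e _ => ?_
        rw [mul_smul_comm, smul_smul]
      rw [e1, Finset.smul_sum]
      refine Finset.sum_congr rfl fun c _ => ?_
      rw [Finset.smul_sum]
      refine Finset.sum_congr rfl fun e _ => ?_
      rw [smul_smul]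
    calc ∑ j : ιG, C b l j • (ω l * dω j)
        = ∑ j : ιG, ∑ c : ιG, ∑ e : ιG,
            ((C b l j * (-(1/2) * C j c e)) : ℝ) • (ω l * (ω c * ω e)) :=
          Finset.sum_congr rfl fun j _ => e2 j
      _ = ∑ c : ιG, ∑ e : ιG, ∑ j : ιG,
            ((C b l j * (-(1/2) * C j c e)) : ℝ) • (ω l * (ω c * ω e)) := by
          rw [Finset.sum_comm]
          exact Finset.sum_congr rfl fun c _ => Finset.sum_comm
      _ = ∑ c : ιG, ∑ e : ιG, ((-(1/2) : ℝ) * T l c e) • (ω l * (ω c * ω e)) := by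
          refine Finset.sum_congr rfl fun c _ => Finset.sum_congr rfl fun e _ => ?_
          rw [← Finset.sum_smul]
          congr 1
          rw [hT]
          simp only []
          rw [Finset.mul_sum]
          exact Finset.sum_congr rfl fun j _ => by ring
  set Sig3 : Λ := ∑ l : ιG, ∑ c : ιG, ∑ e : ιG, T l c e • (ω l * (ω c * ω e)) with hSig3
  have hzero : ∀ l c e, T l c e + T e l c + T c e l = 0 := by
    intro l c e
    have hj := hjac b l c e
    have : T l c e + T e l c + T c e l
        = ∑ j, -((C b j l * C j c e + C b j c * C j e l + C b j e * C j l c)) := by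
      rw [hT]
      simp only []
      rw [← Finset.sum_add_distrib, ← Finset.sum_add_distrib]
      refine Finset.sum_congr rfl fun j _ => ?_
      rw [hanti b l j, hanti b e j, hanti b c j]
      ring
    rw [this, Finset.sum_neg_distrib, hj, neg_zero]
  have h3 : (3 : ℝ) • Sig3 = 0 := by
    have hc1 : Sig3 = ∑ l : ιG, ∑ c : ιG, ∑ e : ιG, T e l c • (ω l * (ω c * ω e)) := hcyc T
    have hc2 : Sig3 = ∑ l : ιG, ∑ c : ιG, ∑ e : ιG, T c e l • (ω l * (ω c * ω e)) := by
      rw [hc1]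
      exact hcyc (fun l c e => T e l c)
    calc (3 : ℝ) • Sig3 = Sig3 + (Sig3 + Sig3) := by
          rw [show (3:ℝ) = 1 + (1 + 1) by norm_num, add_smul, add_smul, one_smul]
      _ = ∑ l : ιG, ∑ c : ιG, ∑ e : ιG,
            (T l c e + (T e l c + T c e l)) • (ω l * (ω c * ω e)) := by
          nth_rewrite 3 [hc2]
          nth_rewrite 2 [hc1]
          rw [hSig3]
          have hsplit : ∑ l : ιG, ∑ c : ιG, ∑ e : ιG,
              (T l c e + (T e l c + T c e l)) • (ω l * (ω c * ω e))
            = (∑ l : ιG, ∑ c : ιG, ∑ e : ιG, T l c e • (ω l * (ω c * ω e)))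
              + ((∑ l : ιG, ∑ c : ιG, ∑ e : ιG, T e l c • (ω l * (ω c * ω e)))
                + (∑ l : ιG, ∑ c : ιG, ∑ e : ιG, T c e l • (ω l * (ω c * ω e)))) := by
            simp only [add_smul, Finset.sum_add_distrib]
          exact hsplit.symm
      _ = 0 := by
          refine Finset.sum_eq_zero fun l _ => Finset.sum_eq_zero fun c _ =>
            Finset.sum_eq_zero fun e _ => ?_
          have := hzero l c e
          rw [← add_assoc] at *
          rw [this, zero_smul]
  have hSig30 : Sig3 = 0 := by
    have := congrArg (fun x => (3⁻¹ : ℝ) • x) h3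
    simpa [smul_smul] using this
  rw [hexp]
  have : ∑ l : ιG, ∑ c : ιG, ∑ e : ιG, ((-(1/2) : ℝ) * T l c e) • (ω l * (ω c * ω e))
      = (-(1/2) : ℝ) • Sig3 := by
    rw [hSig3, Finset.smul_sum]
    refine Finset.sum_congr rfl fun l _ => ?_
    rw [Finset.smul_sum]
    refine Finset.sum_congr rfl fun c _ => ?_
    rw [Finset.smul_sum]
    refine Finset.sum_congr rfl fun e _ => ?_
    rw [smul_smul]
  rw [this, hSig30, smul_zero]


include hksym in
theorem ic_W
    (hωa : ∀ a b, ω a * ω b = - (ω b * ω a))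
    (hdωdef : ∀ a, dω a = - (1/2 : ℝ) • ∑ b, ∑ c, C a b c • (ω b * ω c))
    (icb : Λ →ₗ[ℝ] Λ) (βg : ιG)
    (hic_ω : ∀ a, icb (ω a) = algebraMap ℝ Λ (if βg = a then 1 else 0))
    (hic_dω : ∀ a, icb (dω a) = - ∑ l, C a βg l • ω l)
    (hic_even : ∀ a (y : Λ), icb (dω a * y) = icb (dω a) * y + dω a * icb y)
    (n : ℕ) (A : List ιG) :
    icb (W k ω dω n A)
      = S k dω n (A ++ [βg])
        - n • M k ω dω (fun j => ∑ l, C j βg l • ω l) (n-1) A := by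
  set E : ιG → Λ := fun j => ∑ l, C j βg l • ω l with hE
  have hEcomm : ∀ a j, Commute (dω a) (E j) := by
    intro a j
    rw [hE]
    refine Commute.sum_right _ _ _ fun l _ => ?_
    exact Commute.smul_right (comm_dω_ω C ω dω hωa hdωdef a l) _
  induction n generalizing A with
  | zero =>
      rw [W_zero, map_sum, zero_nsmul, sub_zero, S_zero]
      have hpoint : ∀ im : ιG, icb (k (A ++ [im]) • ω im)
          = if βg = im then k (A ++ [im]) • (1 : Λ) else 0 := by
        intro im
        rw [map_smul, hic_ω]
        by_cases h : βg = im
        · rw [if_pos h, if_pos h, map_one]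
        · rw [if_neg h, if_neg h, map_zero, smul_zero]
      rw [Finset.sum_congr rfl fun im _ => hpoint im, Finset.sum_ite_eq]
      simp
  | succ n ih =>
      rw [W_succ, map_sum]
      have hterm : ∀ j, icb (dω j * W k ω dω n (A ++ [j]))
          = -(E j * W k ω dω n (A ++ [j]))
            + (dω j * S k dω n ((A ++ [j]) ++ [βg])
              - dω j * (n • M k ω dω E (n-1) (A ++ [j]))) := by
        intro j
        rw [hic_even, hic_dω j, ih, mul_sub, neg_mul]
      rw [Finset.sum_congr rfl fun j _ => hterm j]
      rw [Finset.sum_add_distrib, Finset.sum_neg_distrib, Finset.sum_sub_distrib]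
      have h1 : ∑ j : ιG, E j * W k ω dω n (A ++ [j]) = M k ω dω E (n+1-1) A := rfl
      have h2 : ∑ j : ιG, dω j * S k dω n ((A ++ [j]) ++ [βg]) = S k dω (n+1) (A ++ [βg]) := by
        rw [S_succ]
        refine Finset.sum_congr rfl fun j _ => ?_
        congr 1
        refine S_perm k dω hksym ?_
        rw [List.append_assoc, List.append_assoc]
        exact List.Perm.append_left A (List.Perm.swap βg j [])
      rw [h1, h2]
      cases n with
      | zero =>
          simp only [zero_nsmul, mul_zero, Finset.sum_const_zero, sub_zero, one_nsmul]
          abel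
      | succ nn =>
          have h3 : ∑ j : ιG, dω j * ((nn+1) • M k ω dω E (nn+1-1) (A ++ [j]))
              = (nn+1) • M k ω dω E (nn+1) A := by
            rw [M_succ k ω dω hksym E hEcomm nn A, Finset.smul_sum]
            exact Finset.sum_congr rfl fun j _ => (mul_smul_comm _ _ _)
          rw [h3]
          simp only [Nat.add_sub_cancel]
          simp only [succ_nsmul]
          abel


theorem S_snoc (q : ℕ) (A : List ιG) :
    ∑ g : Fin q → ιG, ∑ a : ιG,
        k ((A ++ List.ofFn fun t : Fin q => g t) ++ [a])
          • ((List.ofFn fun t : Fin q => dω (g t)).prod * dω a)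
      = S k dω (q+1) A := by
  induction q generalizing A with
  | zero =>
      rw [Fintype.sum_unique, S_succ]
      refine Finset.sum_congr rfl fun a _ => ?_
      rw [S_zero, mul_smul_comm, mul_one]
      simp
  | succ q ih =>
      rw [sum_pi_succ (fun g : Fin (q+1) → ιG => ∑ a : ιG,
        k ((A ++ List.ofFn fun t : Fin (q+1) => g t) ++ [a])
          • ((List.ofFn fun t : Fin (q+1) => dω (g t)).prod * dω a))]
      rw [S_succ]
      refine Finset.sum_congr rfl fun j _ => ?_
      rw [← ih (A ++ [j]), Finset.mul_sum]
      refine Finset.sum_congr rfl fun g _ => ?_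
      rw [Finset.mul_sum]
      refine Finset.sum_congr rfl fun a _ => ?_
      have h1 : (List.ofFn fun t : Fin (q+1) => (Fin.cons j g : Fin (q+1) → ιG) t)
          = j :: List.ofFn fun t : Fin q => g t := by
        rw [List.ofFn_succ]; simp
      have h2 : (List.ofFn fun t : Fin (q+1) => dω ((Fin.cons j g : Fin (q+1) → ιG) t))
          = dω j :: List.ofFn fun t : Fin q => dω (g t) := by
        rw [List.ofFn_succ]; simp
      rw [h1, h2, List.prod_cons, mul_assoc, mul_smul_comm, List.append_cons A j]

end DicY

section Key

variable (hksym : ∀ l1 l2 : List ιG, l1.Perm l2 → k l1 = k l2)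
variable (hanti : ∀ a b c, C a b c = - C a c b)
variable (hjac : ∀ a b c e, ∑ j, (C a j b * C j c e + C a j c * C j e b + C a j e * C j b c) = 0)
variable (hωa : ∀ a b, ω a * ω b = - (ω b * ω a))
variable (hdωdef : ∀ a, dω a = - (1/2 : ℝ) • ∑ b, ∑ c, C a b c • (ω b * ω c))

include hksym hanti hjac hωa hdωdef in
set_option maxHeartbeats 2000000 in
theorem key (p' q : ℕ)
    (hinv : ∀ (l : ιG) (xs : List ιG), xs.length = (p'+1)+q+1 →
      ∑ r ∈ Finset.range ((p'+1)+q+1), ∑ j, C j l (xs.getD r default) * k (xs.set r j) = 0)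
    (z : Fin (p'+1) → ιG) :
    ∑ w : Fin (p'+1),
        M k ω dω (fun j => ∑ l, C j (z w) l • ω l) q (List.ofFn fun t => z (w.succAbove t))
      = (-2 : ℝ) • S k dω (q+1) (List.ofFn z) := by
  classical
  -- Step 1: expand everything
  have hMW : ∀ w : Fin (p'+1),
      M k ω dω (fun j => ∑ l, C j (z w) l • ω l) q (List.ofFn fun t => z (w.succAbove t))
        = ∑ j : ιG, ∑ l : ιG, ∑ g : Fin q → ιG, ∑ im : ιG,
            (C j (z w) l
              * k ((((List.ofFn fun t => z (w.succAbove t)) ++ [j])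
                    ++ (List.ofFn fun t : Fin q => g t)) ++ [im]))
              • (ω l * ((List.ofFn fun t : Fin q => dω (g t)).prod * ω im)) := by
    intro w
    unfold M W
    refine Finset.sum_congr rfl fun j _ => ?_
    rw [Finset.sum_mul]
    refine Finset.sum_congr rfl fun l _ => ?_
    rw [Finset.mul_sum]
    refine Finset.sum_congr rfl fun g _ => ?_
    rw [Finset.mul_sum]
    refine Finset.sum_congr rfl fun im _ => ?_
    rw [smul_mul_assoc, mul_smul_comm, smul_smul]
  rw [Finset.sum_congr rfl fun w _ => hMW w]
  -- Step 2: reorder the sums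
  have step1 : ∑ w : Fin (p'+1), ∑ j : ιG, ∑ l : ιG, ∑ g : Fin q → ιG, ∑ im : ιG,
        (C j (z w) l
          * k ((((List.ofFn fun t => z (w.succAbove t)) ++ [j])
                ++ (List.ofFn fun t : Fin q => g t)) ++ [im]))
          • (ω l * ((List.ofFn fun t : Fin q => dω (g t)).prod * ω im))
      = ∑ g : Fin q → ιG, ∑ im : ιG, ∑ l : ιG,
          (∑ w : Fin (p'+1), ∑ j : ιG,
            C j (z w) l
              * k ((((List.ofFn fun t => z (w.succAbove t)) ++ [j])
                    ++ (List.ofFn fun t : Fin q => g t)) ++ [im]))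
            • (ω l * ((List.ofFn fun t : Fin q => dω (g t)).prod * ω im)) := by
    calc ∑ w : Fin (p'+1), ∑ j : ιG, ∑ l : ιG, ∑ g : Fin q → ιG, ∑ im : ιG,
        (C j (z w) l
          * k ((((List.ofFn fun t => z (w.succAbove t)) ++ [j])
                ++ (List.ofFn fun t : Fin q => g t)) ++ [im]))
          • (ω l * ((List.ofFn fun t : Fin q => dω (g t)).prod * ω im))
        = ∑ w : Fin (p'+1), ∑ j : ιG, ∑ g : Fin q → ιG, ∑ im : ιG, ∑ l : ιG,
            (C j (z w) l
              * k ((((List.ofFn fun t => z (w.succAbove t)) ++ [j])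
                    ++ (List.ofFn fun t : Fin q => g t)) ++ [im]))
              • (ω l * ((List.ofFn fun t : Fin q => dω (g t)).prod * ω im)) :=
          Finset.sum_congr rfl fun w _ => Finset.sum_congr rfl fun j _ => rot3 _
      _ = ∑ w : Fin (p'+1), ∑ g : Fin q → ιG, ∑ im : ιG, ∑ j : ιG, ∑ l : ιG,
            (C j (z w) l
              * k ((((List.ofFn fun t => z (w.succAbove t)) ++ [j])
                    ++ (List.ofFn fun t : Fin q => g t)) ++ [im]))
              • (ω l * ((List.ofFn fun t : Fin q => dω (g t)).prod * ω im)) :=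
          Finset.sum_congr rfl fun w _ => rot3 _
      _ = ∑ g : Fin q → ιG, ∑ im : ιG, ∑ w : Fin (p'+1), ∑ j : ιG, ∑ l : ιG,
            (C j (z w) l
              * k ((((List.ofFn fun t => z (w.succAbove t)) ++ [j])
                    ++ (List.ofFn fun t : Fin q => g t)) ++ [im]))
              • (ω l * ((List.ofFn fun t : Fin q => dω (g t)).prod * ω im)) := rot3 _
      _ = ∑ g : Fin q → ιG, ∑ im : ιG, ∑ l : ιG, ∑ w : Fin (p'+1), ∑ j : ιG,
            (C j (z w) l
              * k ((((List.ofFn fun t => z (w.succAbove t)) ++ [j])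
                    ++ (List.ofFn fun t : Fin q => g t)) ++ [im]))
              • (ω l * ((List.ofFn fun t : Fin q => dω (g t)).prod * ω im)) :=
          Finset.sum_congr rfl fun g _ => Finset.sum_congr rfl fun im _ => rot3' _
      _ = ∑ g : Fin q → ιG, ∑ im : ιG, ∑ l : ιG,
          (∑ w : Fin (p'+1), ∑ j : ιG,
            C j (z w) l
              * k ((((List.ofFn fun t => z (w.succAbove t)) ++ [j])
                    ++ (List.ofFn fun t : Fin q => g t)) ++ [im]))
            • (ω l * ((List.ofFn fun t : Fin q => dω (g t)).prod * ω im)) := by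
          refine Finset.sum_congr rfl fun g _ => Finset.sum_congr rfl fun im _ =>
            Finset.sum_congr rfl fun l _ => ?_
          rw [Finset.sum_smul]
          exact Finset.sum_congr rfl fun w _ => (Finset.sum_smul).symm
  rw [step1]
  -- Step 3: the scalar identity from ad-invariance
  have hscal : ∀ (g : Fin q → ιG) (im l : ιG),
      (∑ w : Fin (p'+1), ∑ j : ιG,
        C j (z w) l
          * k ((((List.ofFn fun t => z (w.succAbove t)) ++ [j])
                ++ (List.ofFn fun t : Fin q => g t)) ++ [im]))
      = (∑ u ∈ Finset.range q, ∑ j : ιG,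
          C j l ((List.ofFn fun t : Fin q => g t).getD u default)
            * k ((List.ofFn z ++ (List.ofFn fun t : Fin q => g t).set u j) ++ [im]))
        + ∑ j : ιG, C j l im * k ((List.ofFn z ++ List.ofFn fun t : Fin q => g t) ++ [j]) := by
    intro g im l
    set G : List ιG := List.ofFn fun t : Fin q => g t with hG
    set Al : List ιG := List.ofFn z with hAl
    set xs : List ιG := (Al ++ G) ++ [im] with hxs
    have hlenAl : Al.length = p'+1 := by simp [hAl]
    have hlenG : G.length = q := by simp [hG]
    have hlenAG : (Al ++ G).length = (p'+1)+q := by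
      rw [List.length_append, hlenAl, hlenG]
    have hlen : xs.length = (p'+1)+q+1 := by
      rw [hxs, List.length_append, hlenAG]
      simp
    have h0 := hinv l xs hlen
    rw [Finset.sum_range_succ, sum_range_add'] at h0
    have hA : ∑ r ∈ Finset.range (p'+1), ∑ j, C j l (xs.getD r default) * k (xs.set r j)
        = - ∑ w : Fin (p'+1), ∑ j : ιG,
            C j (z w) l
              * k ((((List.ofFn fun t => z (w.succAbove t)) ++ [j]) ++ G) ++ [im]) := by
      rw [← Fin.sum_univ_eq_sum_range
        (fun r => ∑ j, C j l (xs.getD r default) * k (xs.set r j)) (p'+1)]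
      rw [← Finset.sum_neg_distrib]
      refine Finset.sum_congr rfl fun w _ => ?_
      have hwlt : (w : ℕ) < Al.length := by rw [hlenAl]; exact w.isLt
      have hwlt2 : (w : ℕ) < (Al ++ G).length := by rw [hlenAG]; omega
      have hgetD : xs.getD (w : ℕ) default = z w := by
        rw [hxs, List.getD_append _ _ _ _ hwlt2, List.getD_append _ _ _ _ hwlt,
          List.getD_eq_getElem _ _ hwlt]
        simp only [hAl, List.getElem_ofFn, Fin.eta]
      rw [← Finset.sum_neg_distrib]
      refine Finset.sum_congr rfl fun j _ => ?_
      have hsetlist : xs.set (w : ℕ) j = ((Al.set (w : ℕ) j) ++ G) ++ [im] := by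
        rw [hxs, List.set_append, if_pos hwlt2, List.set_append, if_pos hwlt]
      have hsetperm : (Al.set (w : ℕ) j).Perm
          ((List.ofFn fun t => z (w.succAbove t)) ++ [j]) := by
        rw [hAl, ofFn_set z (w : ℕ) w.isLt j]
        have p1 := perm1 (Function.update z w j) w
        have e1 : Function.update z w j w = j := Function.update_self _ _ _
        have e2 : (List.ofFn fun t => Function.update z w j (w.succAbove t))
            = List.ofFn fun t => z (w.succAbove t) := by
          congr 1
          funext t
          exact Function.update_of_ne (Fin.succAbove_ne w t) _ _
        rw [e1, e2] at p1
        have : (Fin.mk (w : ℕ) w.isLt) = w := Fin.eta w w.isLt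
        rw [this]
        exact p1.trans (List.perm_append_singleton j _).symm
      have hk : k (xs.set (w : ℕ) j)
          = k ((((List.ofFn fun t => z (w.succAbove t)) ++ [j]) ++ G) ++ [im]) := by
        rw [hsetlist]
        exact hksym _ _ ((hsetperm.append_right G).append_right [im])
      rw [hgetD, hk, hanti j l (z w), neg_mul]
    have hB : ∑ u ∈ Finset.range q, ∑ j, C j l (xs.getD ((p'+1)+u) default) * k (xs.set ((p'+1)+u) j)
        = ∑ u ∈ Finset.range q, ∑ j : ιG,
            C j l (G.getD u default) * k ((Al ++ G.set u j) ++ [im]) := by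
      refine Finset.sum_congr rfl fun u hu => ?_
      have huq : u < q := Finset.mem_range.mp hu
      have h1 : (p'+1)+u < (Al ++ G).length := by rw [hlenAG]; omega
      have h2 : Al.length ≤ (p'+1)+u := by rw [hlenAl]; omega
      have hgetD : xs.getD ((p'+1)+u) default = G.getD u default := by
        rw [hxs, List.getD_append _ _ _ _ h1, List.getD_append_right _ _ _ _ h2]
        congr 1
        rw [hlenAl]
        omega
      refine Finset.sum_congr rfl fun j _ => ?_
      have hset : xs.set ((p'+1)+u) j = (Al ++ G.set u j) ++ [im] := by
        rw [hxs, List.set_append, if_pos h1, List.set_append, if_neg (by omega)]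
        congr 3
        rw [hlenAl]
        omega
      rw [hgetD, hset]
    have hC : ∑ j, C j l (xs.getD ((p'+1)+q) default) * k (xs.set ((p'+1)+q) j)
        = ∑ j : ιG, C j l im * k ((Al ++ G) ++ [j]) := by
      have h1 : (Al ++ G).length ≤ (p'+1)+q := by rw [hlenAG]
      have hgetD : xs.getD ((p'+1)+q) default = im := by
        rw [hxs, List.getD_append_right _ _ _ _ h1, hlenAG]
        simp
      refine Finset.sum_congr rfl fun j _ => ?_
      have hset : xs.set ((p'+1)+q) j = (Al ++ G) ++ [j] := by
        rw [hxs, List.set_append, if_neg (by rw [hlenAG]; omega)]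
        rw [hlenAG]
        simp
      rw [hgetD, hset]
    rw [hA, hB, hC] at h0
    linarith
  rw [Finset.sum_congr rfl fun g _ => Finset.sum_congr rfl fun im _ =>
    Finset.sum_congr rfl fun l _ => by rw [hscal g im l, add_smul]]
  rw [Finset.sum_congr rfl fun g hg => Finset.sum_congr rfl fun im him =>
    (Finset.sum_add_distrib (s := (Finset.univ : Finset ιG)))]
  rw [Finset.sum_congr rfl fun g hg =>
    (Finset.sum_add_distrib (s := (Finset.univ : Finset ιG)))]
  rw [Finset.sum_add_distrib]
  -- now the two pieces
  have hX : ∑ g : Fin q → ιG, ∑ im : ιG, ∑ l : ιG,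
      (∑ u ∈ Finset.range q, ∑ j : ιG,
          C j l ((List.ofFn fun t : Fin q => g t).getD u default)
            * k ((List.ofFn z ++ (List.ofFn fun t : Fin q => g t).set u j) ++ [im]))
        • (ω l * ((List.ofFn fun t : Fin q => dω (g t)).prod * ω im)) = 0 := by
    have expand : ∀ g : Fin q → ιG, ∀ im l : ιG,
        (∑ u ∈ Finset.range q, ∑ j : ιG,
          C j l ((List.ofFn fun t : Fin q => g t).getD u default)
            * k ((List.ofFn z ++ (List.ofFn fun t : Fin q => g t).set u j) ++ [im]))
          • (ω l * ((List.ofFn fun t : Fin q => dω (g t)).prod * ω im))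
        = ∑ u ∈ Finset.range q, ∑ j : ιG,
            (C j l ((List.ofFn fun t : Fin q => g t).getD u default)
              * k ((List.ofFn z ++ (List.ofFn fun t : Fin q => g t).set u j) ++ [im]))
              • (ω l * ((List.ofFn fun t : Fin q => dω (g t)).prod * ω im)) := by
      intro g im l
      rw [Finset.sum_smul]
      exact Finset.sum_congr rfl fun u _ => Finset.sum_smul
    rw [Finset.sum_congr rfl fun g _ => Finset.sum_congr rfl fun im _ =>
      Finset.sum_congr rfl fun l _ => expand g im l]
    -- reorder (g, im, l, u, j) → (u, g, j, im, l)
    have r1 : ∀ g : Fin q → ιG,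
        (∑ im : ιG, ∑ l : ιG, ∑ u ∈ Finset.range q, ∑ j : ιG,
          (C j l ((List.ofFn fun t : Fin q => g t).getD u default)
            * k ((List.ofFn z ++ (List.ofFn fun t : Fin q => g t).set u j) ++ [im]))
            • (ω l * ((List.ofFn fun t : Fin q => dω (g t)).prod * ω im)))
        = ∑ u ∈ Finset.range q, ∑ j : ιG, ∑ im : ιG, ∑ l : ιG,
            (C j l ((List.ofFn fun t : Fin q => g t).getD u default)
              * k ((List.ofFn z ++ (List.ofFn fun t : Fin q => g t).set u j) ++ [im]))
              • (ω l * ((List.ofFn fun t : Fin q => dω (g t)).prod * ω im)) := by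
      intro g
      have a1 := Finset.sum_congr rfl fun im (_ : im ∈ (Finset.univ : Finset ιG)) =>
        rot3g (Finset.univ : Finset ιG) (Finset.range q) (Finset.univ : Finset ιG)
          (fun l u j =>
            (C j l ((List.ofFn fun t : Fin q => g t).getD u default)
              * k ((List.ofFn z ++ (List.ofFn fun t : Fin q => g t).set u j) ++ [im]))
              • (ω l * ((List.ofFn fun t : Fin q => dω (g t)).prod * ω im)))
      rw [a1]
      exact rot3g (Finset.univ : Finset ιG) (Finset.range q) (Finset.univ : Finset ιG)
        (fun im u j => ∑ l : ιG,
          (C j l ((List.ofFn fun t : Fin q => g t).getD u default)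
            * k ((List.ofFn z ++ (List.ofFn fun t : Fin q => g t).set u j) ++ [im]))
            • (ω l * ((List.ofFn fun t : Fin q => dω (g t)).prod * ω im)))
    rw [Finset.sum_congr rfl fun g _ => r1 g]
    rw [rot3g (Finset.univ : Finset (Fin q → ιG)) (Finset.range q) (Finset.univ : Finset ιG)
      (fun g u j => ∑ im : ιG, ∑ l : ιG,
        (C j l ((List.ofFn fun t : Fin q => g t).getD u default)
          * k ((List.ofFn z ++ (List.ofFn fun t : Fin q => g t).set u j) ++ [im]))
          • (ω l * ((List.ofFn fun t : Fin q => dω (g t)).prod * ω im)))]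
    refine Finset.sum_eq_zero fun u hu => ?_
    have huq : u < q := Finset.mem_range.mp hu
    rw [Finset.sum_comm]
    -- involution (g, j) ↦ (update g u j, g u)
    have hswap : ∀ (H : (Fin q → ιG) → ιG → Λ),
        ∑ g : Fin q → ιG, ∑ j : ιG, H g j
          = ∑ g : Fin q → ιG, ∑ j : ιG, H (Function.update g ⟨u, huq⟩ j) (g ⟨u, huq⟩) := by
      intro H
      have hinvol : Function.Involutive
          (fun x : (Fin q → ιG) × ιG => (Function.update x.1 ⟨u, huq⟩ x.2, x.1 ⟨u, huq⟩)) := by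
        intro x
        refine Prod.ext ?_ ?_
        · funext t
          by_cases h : t = (⟨u, huq⟩ : Fin q)
          · subst h; simp
          · simp [Function.update_apply, h]
        · simp
      calc ∑ g : Fin q → ιG, ∑ j : ιG, H g j
          = ∑ x : (Fin q → ιG) × ιG, H x.1 x.2 :=
            (Fintype.sum_prod_type (fun x : (Fin q → ιG) × ιG => H x.1 x.2)).symm
        _ = ∑ x : (Fin q → ιG) × ιG,
              H (Function.update x.1 ⟨u, huq⟩ x.2) (x.1 ⟨u, huq⟩) :=
            (Fintype.sum_bijective _ hinvol.bijective
              (fun x : (Fin q → ιG) × ιG =>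
                H (Function.update x.1 ⟨u, huq⟩ x.2) (x.1 ⟨u, huq⟩))
              (fun x : (Fin q → ιG) × ιG => H x.1 x.2)
              (fun x => rfl)).symm
        _ = _ := Fintype.sum_prod_type
              (fun x : (Fin q → ιG) × ιG =>
                H (Function.update x.1 ⟨u, huq⟩ x.2) (x.1 ⟨u, huq⟩))
    rw [hswap]
    -- pointwise rewrite of the involuted summand
    have hpoint : ∀ (g : Fin q → ιG) (j : ιG),
        (∑ im : ιG, ∑ l : ιG,
          (C (g ⟨u, huq⟩) l
              ((List.ofFn fun t : Fin q => Function.update g ⟨u, huq⟩ j t).getD u default)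
            * k ((List.ofFn z
                ++ (List.ofFn fun t : Fin q => Function.update g ⟨u, huq⟩ j t).set u (g ⟨u, huq⟩))
                ++ [im]))
            • (ω l * ((List.ofFn fun t : Fin q => dω (Function.update g ⟨u, huq⟩ j t)).prod * ω im)))
        = ∑ im : ιG, ∑ l : ιG,
            (C (g ⟨u, huq⟩) l j
              * k ((List.ofFn z ++ List.ofFn fun t : Fin q => g t) ++ [im]))
              • (ω l * (((List.ofFn fun t : Fin q => dω (g t)).set u (dω j)).prod * ω im)) := by
      intro g j
      have e1 : (List.ofFn fun t : Fin q => Function.update g ⟨u, huq⟩ j t) = (List.ofFn fun t : Fin q => g t).set u j := by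
        rw [ofFn_set _ u huq]
      have hget : ((List.ofFn fun t : Fin q => g t).set u j).getD u default = j := by
        rw [List.getD_eq_getElem _ _ (by simp [huq])]
        simp [List.getElem_set]
      have hset : ((List.ofFn fun t : Fin q => g t).set u j).set u (g ⟨u, huq⟩)
          = List.ofFn fun t : Fin q => g t := by
        rw [List.set_set]
        rw [ofFn_set _ u huq]
        congr 1
        exact Function.update_eq_self _ _
      have e2 : (List.ofFn fun t : Fin q => dω (Function.update g ⟨u, huq⟩ j t))
          = (List.ofFn fun t : Fin q => dω (g t)).set u (dω j) := by
        rw [ofFn_set _ u huq]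
        congr 1
        funext t
        by_cases h : t = (⟨u, huq⟩ : Fin q)
        · subst h; simp
        · simp [Function.update_apply, h]
      rw [e1, hget, hset, e2]
    rw [Finset.sum_congr rfl fun g _ => Finset.sum_congr rfl fun j _ => hpoint g j]
    -- reorder (j, im, l) → (im, l, j) inside each g, then kill with Y_zero
    refine Finset.sum_eq_zero fun g _ => ?_
    rw [rot3 (fun j im l =>
      (C (g ⟨u, huq⟩) l j * k ((List.ofFn z ++ List.ofFn fun t : Fin q => g t) ++ [im]))
        • (ω l * (((List.ofFn fun t : Fin q => dω (g t)).set u (dω j)).prod * ω im)))]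
    refine Finset.sum_eq_zero fun im _ => ?_
    -- now per (g, im): use Jacobi
    have hlenP : u < (List.ofFn fun t : Fin q => dω (g t)).length := by simp [huq]
    have hcomm : ∀ l : ιG, Commute (ω l) ((List.ofFn fun t : Fin q => dω (g t)).take u).prod := by
      intro l
      refine Commute.list_prod_right _ _ fun x hx => ?_
      have hx2 : x ∈ List.ofFn fun t : Fin q => dω (g t) := List.take_subset _ _ hx
      rw [List.mem_ofFn] at hx2
      obtain ⟨t, rfl⟩ := hx2
      exact (comm_dω_ω C ω dω hωa hdωdef (g t) l).symm
    have hvec : ∀ l j : ιG,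
        ω l * (((List.ofFn fun t : Fin q => dω (g t)).set u (dω j)).prod * ω im)
          = ((List.ofFn fun t : Fin q => dω (g t)).take u).prod
            * ((ω l * dω j)
              * (((List.ofFn fun t : Fin q => dω (g t)).drop (u+1)).prod * ω im)) := by
      intro l j
      rw [List.prod_set, if_pos hlenP]
      rw [mul_assoc _ (dω j) _, mul_assoc _ (dω j * _) (ω im), mul_assoc (dω j) _ (ω im)]
      rw [← mul_assoc (ω l), (hcomm l).eq, mul_assoc, ← mul_assoc (ω l) (dω j)]
    rw [Finset.sum_congr rfl fun l _ => Finset.sum_congr rfl fun j _ => by rw [hvec l j]]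
    have hfact : ∑ l : ιG, ∑ j : ιG,
        (C (g ⟨u, huq⟩) l j * k ((List.ofFn z ++ List.ofFn fun t : Fin q => g t) ++ [im]))
          • (((List.ofFn fun t : Fin q => dω (g t)).take u).prod
            * ((ω l * dω j)
              * (((List.ofFn fun t : Fin q => dω (g t)).drop (u+1)).prod * ω im)))
        = k ((List.ofFn z ++ List.ofFn fun t : Fin q => g t) ++ [im])
            • (((List.ofFn fun t : Fin q => dω (g t)).take u).prod
              * ((∑ l : ιG, ∑ j : ιG, C (g ⟨u, huq⟩) l j • (ω l * dω j))
                * (((List.ofFn fun t : Fin q => dω (g t)).drop (u+1)).prod * ω im))) := by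
      rw [Finset.sum_mul, Finset.mul_sum, Finset.smul_sum]
      refine Finset.sum_congr rfl fun l _ => ?_
      rw [Finset.sum_mul, Finset.mul_sum, Finset.smul_sum]
      refine Finset.sum_congr rfl fun j _ => ?_
      rw [smul_mul_assoc, mul_smul_comm, smul_smul, mul_comm]
    rw [hfact, Y_zero C ω dω hωa hdωdef hjac hanti, zero_mul, mul_zero, smul_zero]
  have hZ : ∑ g : Fin q → ιG, ∑ im : ιG, ∑ l : ιG,
      (∑ j : ιG, C j l im * k ((List.ofFn z ++ List.ofFn fun t : Fin q => g t) ++ [j]))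
        • (ω l * ((List.ofFn fun t : Fin q => dω (g t)).prod * ω im))
      = (-2 : ℝ) • S k dω (q+1) (List.ofFn z) := by
    have expand : ∀ g : Fin q → ιG, ∀ im l : ιG,
        (∑ j : ιG, C j l im * k ((List.ofFn z ++ List.ofFn fun t : Fin q => g t) ++ [j]))
          • (ω l * ((List.ofFn fun t : Fin q => dω (g t)).prod * ω im))
        = ∑ j : ιG, (C j l im * k ((List.ofFn z ++ List.ofFn fun t : Fin q => g t) ++ [j]))
            • (ω l * ((List.ofFn fun t : Fin q => dω (g t)).prod * ω im)) :=
      fun g im l => Finset.sum_smul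
    rw [Finset.sum_congr rfl fun g _ => Finset.sum_congr rfl fun im _ =>
      Finset.sum_congr rfl fun l _ => expand g im l]
    have reorder : ∀ g : Fin q → ιG,
        (∑ im : ιG, ∑ l : ιG, ∑ j : ιG,
          (C j l im * k ((List.ofFn z ++ List.ofFn fun t : Fin q => g t) ++ [j]))
            • (ω l * ((List.ofFn fun t : Fin q => dω (g t)).prod * ω im)))
        = ∑ a : ιG, ∑ b : ιG, ∑ l : ιG,
            (C a l b * k ((List.ofFn z ++ List.ofFn fun t : Fin q => g t) ++ [a]))
              • (ω l * ((List.ofFn fun t : Fin q => dω (g t)).prod * ω b)) := by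
      intro g
      rw [rot3]
      exact rot3 (fun l j im =>
        (C j l im * k ((List.ofFn z ++ List.ofFn fun t : Fin q => g t) ++ [j]))
          • (ω l * ((List.ofFn fun t : Fin q => dω (g t)).prod * ω im)))
    rw [Finset.sum_congr rfl fun g _ => reorder g]
    have inner : ∀ g : Fin q → ιG, ∀ a : ιG,
        (∑ b : ιG, ∑ l : ιG,
          (C a l b * k ((List.ofFn z ++ List.ofFn fun t : Fin q => g t) ++ [a]))
            • (ω l * ((List.ofFn fun t : Fin q => dω (g t)).prod * ω b)))
        = (-2 : ℝ) • (k ((List.ofFn z ++ List.ofFn fun t : Fin q => g t) ++ [a])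
            • ((List.ofFn fun t : Fin q => dω (g t)).prod * dω a)) := by
      intro g a
      have hvec : ∀ l b : ιG,
          ω l * ((List.ofFn fun t : Fin q => dω (g t)).prod * ω b)
            = (List.ofFn fun t : Fin q => dω (g t)).prod * (ω l * ω b) := by
        intro l b
        rw [← mul_assoc, (comm_prod_ω C ω dω hωa hdωdef g l).eq, mul_assoc]
      calc ∑ b : ιG, ∑ l : ιG,
          (C a l b * k ((List.ofFn z ++ List.ofFn fun t : Fin q => g t) ++ [a]))
            • (ω l * ((List.ofFn fun t : Fin q => dω (g t)).prod * ω b))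
          = ∑ l : ιG, ∑ b : ιG,
            (C a l b * k ((List.ofFn z ++ List.ofFn fun t : Fin q => g t) ++ [a]))
              • (ω l * ((List.ofFn fun t : Fin q => dω (g t)).prod * ω b)) := Finset.sum_comm
        _ = k ((List.ofFn z ++ List.ofFn fun t : Fin q => g t) ++ [a])
              • ((List.ofFn fun t : Fin q => dω (g t)).prod
                * (∑ l : ιG, ∑ b : ιG, C a l b • (ω l * ω b))) := by
            rw [Finset.mul_sum, Finset.smul_sum]
            refine Finset.sum_congr rfl fun l _ => ?_
            rw [Finset.mul_sum, Finset.smul_sum]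
            refine Finset.sum_congr rfl fun b _ => ?_
            rw [hvec l b, mul_smul_comm, smul_smul, mul_comm]
        _ = (-2 : ℝ) • (k ((List.ofFn z ++ List.ofFn fun t : Fin q => g t) ++ [a])
              • ((List.ofFn fun t : Fin q => dω (g t)).prod * dω a)) := by
            have hdd : ∑ l : ιG, ∑ b : ιG, C a l b • (ω l * ω b) = (-2 : ℝ) • dω a := by
              rw [hdωdef a, smul_smul]
              norm_num
            rw [hdd, mul_smul_comm, smul_comm]
    rw [Finset.sum_congr rfl fun g _ => Finset.sum_congr rfl fun a _ => inner g a]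
    rw [← S_snoc k dω q (List.ofFn z), Finset.smul_sum]
    refine Finset.sum_congr rfl fun g _ => ?_
    rw [Finset.smul_sum]
  rw [hX, hZ, zero_add]

end Key
end Main
end GWZW


set_option maxHeartbeats 1000000 in
/-- The descent relations for the forms
`Ω'_{(p)α₁…α_{p-1}} = k_{α₁…α_{p-1} i_p…i_{m-1} i_m} dω^{i_p}∧⋯∧dω^{i_{m-1}}∧ω^{i_m}`
and
`Π'_{(p)α₁…α_p} = k_{α₁…α_p i_{p+1}…i_m} dω^{i_{p+1}}∧⋯∧dω^{i_m}`
on a Lie group `G` (Maurer–Cartan forms `ωⁱ`, `dωⁱ = -½Cⁱ_{jk}ωʲωᵏ`,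
contractions `i_α` with the left-invariant vector fields of the subalgebra
`𝓗`, `k` a symmetric ad-invariant `m`-tensor):
`d Ω'_{(p)α₁…α_{p-1}} = Π'_{(p-1)α₁…α_{p-1}}`, and
`i_{{α_p} Ω'_{(p)α₁…α_{p-1}}} = ((2m-p)/p) Π'_{(p)α₁…α_p}
 = ((2m-p)/p) d Ω'_{(p+1)α₁…α_p}`
(curly brackets: symmetrization of the `α`'s). -/
theorem gauged_wzw_descent_relations
    {ιG : Type*} [Fintype ιG] [DecidableEq ιG] [Inhabited ιG]
    {ιH : Type*} [Fintype ιH] (incl : ιH → ιG)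
    (m : ℕ) (hm : 1 ≤ m)
    (C : ιG → ιG → ιG → ℝ)
    (hanti : ∀ a b c, C a b c = - C a c b)
    (hjac : ∀ a b c e,
      ∑ j, (C a j b * C j c e + C a j c * C j e b + C a j e * C j b c) = 0)
    (k : List ιG → ℝ)
    (hksym : ∀ l1 l2 : List ιG, l1.Perm l2 → k l1 = k l2)
    (hinv : ∀ (l : ιG) (xs : List ιG), xs.length = m →
      ∑ r ∈ Finset.range m, ∑ j, C j l (xs.getD r default) * k (xs.set r j) = 0)
    {Λ : Type*} [Ring Λ] [Algebra ℝ Λ]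
    (ω dω : ιG → Λ)
    (hωa : ∀ a b, ω a * ω b = - (ω b * ω a))
    (hdωdef : ∀ a, dω a = - (1/2 : ℝ) • ∑ b, ∑ c, C a b c • (ω b * ω c))
    (d : Λ →ₗ[ℝ] Λ) (ic : ιH → Λ →ₗ[ℝ] Λ)
    (hd_ω : ∀ a, d (ω a) = dω a)
    (hd_dω : ∀ a, d (dω a) = 0)
    (hd_even : ∀ a (y : Λ), d (dω a * y) = dω a * d y)
    (hic_ω : ∀ b a, ic b (ω a) = algebraMap ℝ Λ (if incl b = a then 1 else 0))
    (hic_dω : ∀ b a, ic b (dω a) = - ∑ l, C a (incl b) l • ω l)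
    (hic_even : ∀ b a (y : Λ), ic b (dω a * y) = ic b (dω a) * y + dω a * ic b y)
    (Ωf : (p : ℕ) → (Fin (p - 1) → ιH) → Λ)
    (hΩf : ∀ p (a : Fin (p - 1) → ιH),
      Ωf p a = ∑ g : Fin (m - p) → ιG, ∑ im,
        k ((List.ofFn fun t => incl (a t))
            ++ (List.ofFn fun t : Fin (m - p) => g t) ++ [im])
          • ((List.ofFn fun t : Fin (m - p) => dω (g t)).prod * ω im))
    (Pf : (p : ℕ) → (Fin p → ιH) → Λ)
    (hPf : ∀ p (a : Fin p → ιH),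
      Pf p a = ∑ g : Fin (m - p) → ιG,
        k ((List.ofFn fun t => incl (a t))
            ++ List.ofFn fun t : Fin (m - p) => g t)
          • (List.ofFn fun t : Fin (m - p) => dω (g t)).prod) :
    (∀ q, 1 ≤ q → q ≤ m → ∀ a : Fin (q - 1) → ιH, d (Ωf q a) = Pf (q - 1) a) ∧
    (∀ p (hp1 : 1 ≤ p) (hp2 : p ≤ m - 1) (α : Fin p → ιH),
      ((p.factorial : ℝ)⁻¹ •
        ∑ σ : Equiv.Perm (Fin p),
          ic (α (σ ⟨p - 1, Nat.sub_lt hp1 Nat.one_pos⟩))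
            (Ωf p (fun t : Fin (p - 1) => α (σ (Fin.castLE (Nat.sub_le p 1) t)))))
        = ((2 * m - p : ℝ) / p) • Pf p α ∧
      ((2 * m - p : ℝ) / p) • Pf p α = ((2 * m - p : ℝ) / p) • d (Ωf (p + 1) α)) := by
  classical
  have part1 : ∀ q, 1 ≤ q → q ≤ m → ∀ a : Fin (q - 1) → ιH, d (Ωf q a) = Pf (q - 1) a := by
    intro q hq1 hq2 a
    have hWo : Ωf q a = GWZW.W k ω dω (m - q) (List.ofFn fun t => incl (a t)) := by
      rw [hΩf]
      rfl
    rw [hWo, GWZW.d_W k ω dω d hd_ω hd_even, hPf,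
      show m - (q - 1) = (m - q) + 1 from by omega]
    rfl
  refine ⟨part1, ?_⟩
  intro p hp1 hp2 α
  have hpart3 : ((2 * m - p : ℝ) / p) • Pf p α = ((2 * m - p : ℝ) / p) • d (Ωf (p + 1) α) := by
    rw [part1 (p+1) (by omega) (by omega) α]
    rfl
  refine ⟨?_, hpart3⟩
  obtain ⟨p', rfl⟩ : ∃ p', p = p' + 1 := ⟨p - 1, by omega⟩
  have hterm : ∀ σ : Equiv.Perm (Fin (p'+1)),
      ic (α (σ ⟨p'+1-1, Nat.sub_lt hp1 Nat.one_pos⟩))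
          (Ωf (p'+1) (fun t : Fin (p'+1-1) => α (σ (Fin.castLE (Nat.sub_le (p'+1) 1) t))))
        = ic (α (σ (Fin.last p')))
            (GWZW.W k ω dω (m - (p'+1))
              (List.ofFn fun t : Fin p' => incl (α ((σ (Fin.last p')).succAbove t)))) := by
    intro σ
    have hWo : Ωf (p'+1) (fun t : Fin (p'+1-1) => α (σ (Fin.castLE (Nat.sub_le (p'+1) 1) t)))
        = GWZW.W k ω dω (m - (p'+1))
            (List.ofFn fun t : Fin p' =>
              incl (α (σ (Fin.castLE (Nat.sub_le (p'+1) 1) t)))) := by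
      rw [hΩf]
      rfl
    have hperm : (List.ofFn fun t : Fin p' =>
          incl (α (σ (Fin.castLE (Nat.sub_le (p'+1) 1) t)))).Perm
        (List.ofFn fun t : Fin p' => incl (α ((σ (Fin.last p')).succAbove t))) := by
      have h3 : List.ofFn ((fun i : Fin (p'+1) => incl (α i)) ∘ σ)
          = (List.ofFn fun t : Fin p' => incl (α (σ t.castSucc)))
            ++ [incl (α (σ (Fin.last p')))] := by
        rw [List.ofFn_succ' ((fun i : Fin (p'+1) => incl (α i)) ∘ σ), List.concat_eq_append]
        rfl
      have p4 := Equiv.Perm.ofFn_comp_perm σ (fun i : Fin (p'+1) => incl (α i))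
      have p5 := GWZW.perm1 (fun i : Fin (p'+1) => incl (α i)) (σ (Fin.last p'))
      have p6 : ((List.ofFn fun t : Fin p' => incl (α (σ t.castSucc)))
            ++ [incl (α (σ (Fin.last p')))]).Perm
          (incl (α (σ (Fin.last p'))) :: List.ofFn fun t : Fin p' => incl (α (σ t.castSucc))) :=
        List.perm_append_singleton _ _
      have hcomb : (incl (α (σ (Fin.last p')))
            :: List.ofFn fun t : Fin p' => incl (α (σ t.castSucc))).Perm
          (incl (α (σ (Fin.last p')))
            :: List.ofFn fun t : Fin p' => incl (α ((σ (Fin.last p')).succAbove t))) := by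
        refine p6.symm.trans ?_
        rw [← h3]
        exact p4.trans p5
      exact (List.perm_cons _).mp hcomb
    have hIdx : (⟨p'+1-1, Nat.sub_lt hp1 Nat.one_pos⟩ : Fin (p'+1)) = Fin.last p' := rfl
    rw [hWo, hIdx]
    exact congrArg (⇑(ic (α (σ (Fin.last p')))))
      (GWZW.W_perm k ω dω hksym hperm)
  rw [Finset.sum_congr rfl fun σ _ => hterm σ]
  rw [GWZW.group_sum (fun w : Fin (p'+1) => ic (α w)
    (GWZW.W k ω dω (m - (p'+1))
      (List.ofFn fun t : Fin p' => incl (α (w.succAbove t)))))]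
  have hicW : ∀ w : Fin (p'+1),
      ic (α w) (GWZW.W k ω dω (m-(p'+1))
          (List.ofFn fun t : Fin p' => incl (α (w.succAbove t))))
        = GWZW.S k dω (m-(p'+1))
            ((List.ofFn fun t : Fin p' => incl (α (w.succAbove t))) ++ [incl (α w)])
          - (m-(p'+1)) • GWZW.M k ω dω (fun j => ∑ l, C j (incl (α w)) l • ω l)
              (m-(p'+1)-1) (List.ofFn fun t : Fin p' => incl (α (w.succAbove t))) :=
    fun w => GWZW.ic_W k C ω dω hksym hωa hdωdef (ic (α w)) (incl (α w))
      (hic_ω (α w)) (hic_dω (α w)) (hic_even (α w)) (m-(p'+1)) _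
  rw [Finset.sum_congr rfl fun w _ => hicW w, Finset.sum_sub_distrib]
  have hSpart : ∀ w : Fin (p'+1),
      GWZW.S k dω (m-(p'+1))
          ((List.ofFn fun t : Fin p' => incl (α (w.succAbove t))) ++ [incl (α w)])
        = GWZW.S k dω (m-(p'+1)) (List.ofFn fun i : Fin (p'+1) => incl (α i)) := by
    intro w
    refine GWZW.S_perm k dω hksym ?_
    exact (List.perm_append_singleton _ _).trans
      (GWZW.perm1 (fun i : Fin (p'+1) => incl (α i)) w).symm
  rw [Finset.sum_congr rfl fun w _ => hSpart w, Finset.sum_const, Finset.card_univ,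
    Fintype.card_fin]
  have hinv' : ∀ (l : ιG) (xs : List ιG), xs.length = p'+1+(m-(p'+1)-1)+1 →
      ∑ r ∈ Finset.range (p'+1+(m-(p'+1)-1)+1), ∑ j,
        C j l (xs.getD r default) * k (xs.set r j) = 0 := by
    rw [show p'+1+(m-(p'+1)-1)+1 = m from by omega]
    exact hinv
  have hkey := GWZW.key k C ω dω hksym hanti hjac hωa hdωdef p' (m-(p'+1)-1) hinv'
    (fun i => incl (α i))
  rw [show m-(p'+1)-1+1 = m-(p'+1) from by omega] at hkey
  rw [← Finset.smul_sum, hkey]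
  have hPfS : Pf (p'+1) α
      = GWZW.S k dω (m-(p'+1)) (List.ofFn fun i : Fin (p'+1) => incl (α i)) := by
    rw [hPf]
    rfl
  rw [hPfS]
  generalize GWZW.S k dω (m-(p'+1)) (List.ofFn fun i : Fin (p'+1) => incl (α i)) = SS
  rw [← Nat.cast_smul_eq_nsmul ℝ (p'+1) SS,
    ← Nat.cast_smul_eq_nsmul ℝ (m-(p'+1)) ((-2:ℝ) • SS),
    ← Nat.cast_smul_eq_nsmul ℝ p'.factorial]
  rw [smul_smul ((((m - (p' + 1)) : ℕ) : ℝ)) (-2 : ℝ) SS]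
  rw [← sub_smul]
  rw [smul_smul, smul_smul]
  congr 1
  have hfac : ((p'+1).factorial : ℝ) = (p'+1 : ℝ) * (p'.factorial : ℝ) := by
    rw [Nat.factorial_succ]
    push_cast
    ring
  have hcast : ((m - (p'+1) : ℕ) : ℝ) = (m : ℝ) - (p'+1 : ℝ) := by
    have : (p'+1 : ℕ) ≤ m := by omega
    push_cast [Nat.cast_sub this]
    ring
  have hfne : (p'.factorial : ℝ) ≠ 0 := by
    exact_mod_cast Nat.factorial_ne_zero p'
  have hpne : ((p' : ℝ) + 1) ≠ 0 := by positivity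
  rw [hfac, hcast]
  push_cast
  field_simp
  ring
end

section
/- Define $\Omega_{[s]} := \sum_{p+q=s-1}\frac{(m-p-1)!(m-q-1)!}{p!\,q!}\,\Upsilon_{[p,q]}$ with $\Upsilon_{[p,q]} = \mathrm{sTr}(\omega F_L^p (g^{-1}F_Rg)^q (\omega^2)^{m-p-q-1})$. Assuming the relations $d\Upsilon_{[p,q]} = -\Pi_{[p,q]} - q\Gamma_{[p,q]}$, $F_L^\alpha i_{L\alpha}\Upsilon_{[p,q]} = \Pi_{[p+1,q]} + \frac{m-p-q-1}{p+1}(2\Pi_{[p+1,q]} + q\Gamma_{[p+1,q]})$, $F_R^\alpha i_{R\alpha}\Upsilon_{[p,q]} = -\Pi_{[p,q+1]} + (m-p-q-1)\Gamma_{[p,q+1]}$, and $2\Pi_{[0,q]} + q\Gamma_{[0,q]} = 0$, it follows that for $1\le s\le m-1$: $(F_L^\alpha i_{L\alpha} + F_R^\alpha i_{R\alpha})\,\Omega_{[s]} = -(2m-s)(m-s)\, d\,\Omega_{[s+1]}$. -/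
private noncomputable def cN (m s p : ℕ) : ℝ :=
  (((m - p - 1).factorial * (m - (s - 1 - p) - 1).factorial : ℕ) : ℝ)
    / ((p.factorial * (s - 1 - p).factorial : ℕ) : ℝ)

private noncomputable def UU {V : Type*} [AddCommGroup V] [Module ℝ V]
    (Pi Γ : ℕ → ℕ → V) (k r a : ℕ) : V :=
  (cN (k + r + 2) (k + 1) (a - 1) * (((a : ℝ) + 2 * ((r : ℝ) + 1)) / (a : ℝ))) • Pi a (k + 1 - a)
    + (cN (k + r + 2) (k + 1) (a - 1) * ((r : ℝ) + 1) * ((k + 1 - a : ℕ) : ℝ) / (a : ℝ)) • Γ a (k + 1 - a)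

private noncomputable def VV {V : Type*} [AddCommGroup V] [Module ℝ V]
    (Pi Γ : ℕ → ℕ → V) (k r p : ℕ) : V :=
  (-(cN (k + r + 2) (k + 1) p)) • Pi p (k + 1 - p)
    + (cN (k + r + 2) (k + 1) p * ((r : ℝ) + 1)) • Γ p (k + 1 - p)

private noncomputable def FF {V : Type*} [AddCommGroup V] [Module ℝ V]
    (Pi Γ : ℕ → ℕ → V) (k r a : ℕ) : V :=
  (((((k + 2 * r + 3) * (r + 1) : ℕ)) : ℝ) * cN (k + r + 2) (k + 1 + 1) a) • Pi a (k + 1 - a)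
    + (((((k + 2 * r + 3) * (r + 1) : ℕ)) : ℝ) * cN (k + r + 2) (k + 1 + 1) a * ((k + 1 - a : ℕ) : ℝ)) • Γ a (k + 1 - a)

private lemma factR (n : ℕ) : (((n + 1).factorial : ℕ) : ℝ) = ((n : ℝ) + 1) * (n.factorial : ℝ) := by
  rw [Nat.factorial_succ]; push_cast; ring

private lemma factNZ (n : ℕ) : ((n.factorial : ℕ) : ℝ) ≠ 0 :=
  Nat.cast_ne_zero.mpr n.factorial_ne_zero


/-- Left–right descent.  With
`Ω_[s] = ∑_{p+q=s-1} ((m-p-1)!(m-q-1)!/(p! q!)) Υ_[p,q]` and assuming the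
relations
`d Υ_[p,q] = -Π_[p,q] - q Γ_[p,q]`,
`F_Lᵅ i_{Lα} Υ_[p,q] = Π_[p+1,q] + ((m-p-q-1)/(p+1))(2Π_[p+1,q] + qΓ_[p+1,q])`,
`F_Rᵅ i_{Rα} Υ_[p,q] = -Π_[p,q+1] + (m-p-q-1) Γ_[p,q+1]`, and
`2Π_[0,q] + qΓ_[0,q] = 0`,
it follows that for `1 ≤ s ≤ m-1`:
`(F_Lᵅ i_{Lα} + F_Rᵅ i_{Rα}) Ω_[s] = -(2m-s)(m-s) d Ω_[s+1]`. -/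
theorem left_right_descent
    {V : Type*} [AddCommGroup V] [Module ℝ V]
    (m : ℕ) (hm : 2 ≤ m)
    (Υ Pi Γ : ℕ → ℕ → V)
    (d cL cR : V →ₗ[ℝ] V)
    (hd : ∀ p q, d (Υ p q) = - Pi p q - (q : ℝ) • Γ p q)
    (hcL : ∀ p q, cL (Υ p q)
        = Pi (p + 1) q
          + (((m : ℝ) - p - q - 1) / (p + 1)) •
              ((2 : ℝ) • Pi (p + 1) q + (q : ℝ) • Γ (p + 1) q))
    (hcR : ∀ p q, cR (Υ p q)
        = - Pi p (q + 1) + ((m : ℝ) - p - q - 1) • Γ p (q + 1))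
    (hΓ0 : ∀ q, (2 : ℝ) • Pi 0 q + (q : ℝ) • Γ 0 q = 0)
    (Ω : ℕ → V)
    (hΩ : ∀ s, Ω s = ∑ p ∈ Finset.range s,
      ((((m - p - 1).factorial * (m - (s - 1 - p) - 1).factorial : ℕ) : ℝ)
          / ((p.factorial * (s - 1 - p).factorial : ℕ) : ℝ)) •
        Υ p (s - 1 - p)) :
    ∀ s, 1 ≤ s → s ≤ m - 1 →
      cL (Ω s) + cR (Ω s)
        = - (((2 * m - s) * (m - s) : ℕ) : ℝ) • d (Ω (s + 1)) := by
  intro s hs1 hs2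
  obtain ⟨k, rfl⟩ : ∃ k, s = k + 1 := ⟨s - 1, by omega⟩
  obtain ⟨r, rfl⟩ : ∃ r, m = k + r + 2 := ⟨m - k - 2, by omega⟩
  have hΩ' : ∀ s', Ω s' = ∑ p ∈ Finset.range s', cN (k + r + 2) s' p • Υ p (s' - 1 - p) := by
    intro s'; rw [hΩ]; rfl
  -- step A: expand the left side
  have hA : cL (Ω (k + 1)) + cR (Ω (k + 1))
      = ∑ p ∈ Finset.range (k + 1),
          cN (k + r + 2) (k + 1) p • (cL (Υ p (k + 1 - 1 - p)) + cR (Υ p (k + 1 - 1 - p))) := by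
    rw [hΩ', map_sum, map_sum, ← Finset.sum_add_distrib]
    exact Finset.sum_congr rfl fun p _ => by rw [map_smul, map_smul, smul_add]
  -- step B: pointwise rewrite
  have hB : ∀ p ∈ Finset.range (k + 1),
      cN (k + r + 2) (k + 1) p • (cL (Υ p (k + 1 - 1 - p)) + cR (Υ p (k + 1 - 1 - p)))
        = UU Pi Γ k r (p + 1) + VV Pi Γ k r p := by
    intro p hp
    have hp' : p ≤ k := by simpa [Nat.lt_succ_iff] using hp
    obtain ⟨j, rfl⟩ : ∃ j, k = p + j := ⟨k - p, by omega⟩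
    rw [show p + j + 1 - 1 - p = j by omega, hcL p j, hcR p j]
    unfold UU VV
    simp only [Nat.add_sub_cancel]
    rw [show p + j + 1 - (p + 1) = j by omega, show p + j + 1 - p = j + 1 by omega]
    have hp1 : ((p : ℝ) + 1) ≠ 0 := by positivity
    have hinv : ((p : ℝ) + 1) * ((p : ℝ) + 1)⁻¹ = 1 := mul_inv_cancel₀ hp1
    match_scalars <;> push_cast <;>
      first
      | ring1
      | linear_combination (-(cN (p + j + r + 2) (p + j + 1) p)) * hinv
  -- boundary and middle facts
  have hu0 : UU Pi Γ k r 0 = 0 := by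
    simp [UU]
  have hmid : ∀ i, i < k →
      UU Pi Γ k r (i + 1) + VV Pi Γ k r (i + 1) = FF Pi Γ k r (i + 1) := by
    intro i hik
    obtain ⟨j, rfl⟩ : ∃ j, k = i + 1 + j := ⟨k - i - 1, by omega⟩
    have e1 : cN (i + 1 + j + r + 2) (i + 1 + j + 1) i
        = (((j + r + 2).factorial * (i + r + 1).factorial : ℕ) : ℝ)
          / ((i.factorial * (j + 1).factorial : ℕ) : ℝ) := by
      unfold cN
      rw [show i + 1 + j + 1 - 1 - i = j + 1 by omega,
        show i + 1 + j + r + 2 - i - 1 = j + r + 2 by omega,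
        show i + 1 + j + r + 2 - (j + 1) - 1 = i + r + 1 by omega]
    have e2 : cN (i + 1 + j + r + 2) (i + 1 + j + 1) (i + 1)
        = (((j + r + 1).factorial * (i + r + 2).factorial : ℕ) : ℝ)
          / (((i + 1).factorial * j.factorial : ℕ) : ℝ) := by
      unfold cN
      rw [show i + 1 + j + 1 - 1 - (i + 1) = j by omega,
        show i + 1 + j + r + 2 - (i + 1) - 1 = j + r + 1 by omega,
        show i + 1 + j + r + 2 - j - 1 = i + r + 2 by omega]
    have e3 : cN (i + 1 + j + r + 2) (i + 1 + j + 1 + 1) (i + 1)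
        = (((j + r + 1).factorial * (i + r + 1).factorial : ℕ) : ℝ)
          / (((i + 1).factorial * (j + 1).factorial : ℕ) : ℝ) := by
      unfold cN
      rw [show i + 1 + j + 1 + 1 - 1 - (i + 1) = j + 1 by omega,
        show i + 1 + j + r + 2 - (i + 1) - 1 = j + r + 1 by omega,
        show i + 1 + j + r + 2 - (j + 1) - 1 = i + r + 1 by omega]
    unfold UU VV FF
    simp only [Nat.add_sub_cancel]
    rw [show i + 1 + j + 1 - (i + 1) = j + 1 by omega]
    rw [e1, e2, e3]
    have hf1 : (((j + r + 2).factorial : ℕ) : ℝ)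
        = ((j : ℝ) + (r : ℝ) + 2) * (((j + r + 1).factorial : ℕ) : ℝ) := by
      rw [show j + r + 2 = (j + r + 1) + 1 by ring, factR]; push_cast; ring
    have hf2 : (((i + r + 2).factorial : ℕ) : ℝ)
        = ((i : ℝ) + (r : ℝ) + 2) * (((i + r + 1).factorial : ℕ) : ℝ) := by
      rw [show i + r + 2 = (i + r + 1) + 1 by ring, factR]; push_cast; ring
    have hf3 : (((i + 1).factorial : ℕ) : ℝ) = ((i : ℝ) + 1) * ((i.factorial : ℕ) : ℝ) := factR i
    have hf4 : (((j + 1).factorial : ℕ) : ℝ) = ((j : ℝ) + 1) * ((j.factorial : ℕ) : ℝ) := factR j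
    have n1 : ((i.factorial : ℕ) : ℝ) ≠ 0 := factNZ i
    have n2 : ((j.factorial : ℕ) : ℝ) ≠ 0 := factNZ j
    have n3 : (((j + r + 1).factorial : ℕ) : ℝ) ≠ 0 := factNZ _
    have n4 : (((i + r + 1).factorial : ℕ) : ℝ) ≠ 0 := factNZ _
    have n5 : ((i : ℝ) + 1) ≠ 0 := by positivity
    have n6 : ((j : ℝ) + 1) ≠ 0 := by positivity
    match_scalars <;> push_cast <;> rw [hf1, hf2, hf3, hf4] <;>
      field_simp <;> ring
  have e01 : cN (k + r + 2) (k + 1) 0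
      = (((k + r + 1).factorial * (r + 1).factorial : ℕ) : ℝ)
        / ((Nat.factorial 0 * k.factorial : ℕ) : ℝ) := by
    unfold cN
    rw [show k + 1 - 1 - 0 = k by omega, show k + r + 2 - 0 - 1 = k + r + 1 by omega,
      show k + r + 2 - k - 1 = r + 1 by omega]
  have e02 : cN (k + r + 2) (k + 1 + 1) 0
      = (((k + r + 1).factorial * r.factorial : ℕ) : ℝ)
        / ((Nat.factorial 0 * (k + 1).factorial : ℕ) : ℝ) := by
    unfold cN
    rw [show k + 1 + 1 - 1 - 0 = k + 1 by omega, show k + r + 2 - 0 - 1 = k + r + 1 by omega,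
      show k + r + 2 - (k + 1) - 1 = r by omega]
  have ek1 : cN (k + r + 2) (k + 1) k
      = (((r + 1).factorial * (k + r + 1).factorial : ℕ) : ℝ)
        / ((k.factorial * Nat.factorial 0 : ℕ) : ℝ) := by
    unfold cN
    rw [show k + 1 - 1 - k = 0 by omega, show k + r + 2 - k - 1 = r + 1 by omega,
      show k + r + 2 - 0 - 1 = k + r + 1 by omega]
  have ek2 : cN (k + r + 2) (k + 1 + 1) (k + 1)
      = ((r.factorial * (k + r + 1).factorial : ℕ) : ℝ)
        / (((k + 1).factorial * Nat.factorial 0 : ℕ) : ℝ) := by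
    unfold cN
    rw [show k + 1 + 1 - 1 - (k + 1) = 0 by omega, show k + r + 2 - (k + 1) - 1 = r by omega,
      show k + r + 2 - 0 - 1 = k + r + 1 by omega]
  have hfk : (((k + 1).factorial : ℕ) : ℝ) = ((k : ℝ) + 1) * ((k.factorial : ℕ) : ℝ) := factR k
  have hfr : (((r + 1).factorial : ℕ) : ℝ) = ((r : ℝ) + 1) * ((r.factorial : ℕ) : ℝ) := factR r
  have nk : ((k.factorial : ℕ) : ℝ) ≠ 0 := factNZ k
  have nr : ((r.factorial : ℕ) : ℝ) ≠ 0 := factNZ r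
  have nkr : (((k + r + 1).factorial : ℕ) : ℝ) ≠ 0 := factNZ _
  have nk1 : ((k : ℝ) + 1) ≠ 0 := by positivity
  have h0 : VV Pi Γ k r 0 = FF Pi Γ k r 0 := by
    have hg := hΓ0 (k + 1)
    have hP : Pi 0 (k + 1) = (-(((k + 1 : ℕ) : ℝ)) / 2) • Γ 0 (k + 1) := by
      linear_combination (norm := module) (2 : ℝ)⁻¹ • hg
    unfold VV FF
    simp only [Nat.sub_zero]
    rw [e01, e02, hP]
    match_scalars <;> push_cast [Nat.factorial_zero] <;> rw [hfk, hfr] <;>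
      field_simp <;> ring
  have hend : UU Pi Γ k r (k + 1) = FF Pi Γ k r (k + 1) := by
    unfold UU FF
    simp only [Nat.add_sub_cancel, Nat.sub_self]
    rw [ek1, ek2]
    match_scalars <;> push_cast [Nat.factorial_zero] <;> rw [hfk, hfr] <;>
      field_simp <;> ring
  have hE : (-((((k + 2 * r + 3) * (r + 1) : ℕ)) : ℝ)) • d (Ω (k + 1 + 1))
      = ∑ a ∈ Finset.range (k + 1 + 1), FF Pi Γ k r a := by
    rw [hΩ', map_sum, Finset.smul_sum]
    refine Finset.sum_congr rfl fun a ha => ?_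
    rw [map_smul, show k + 1 + 1 - 1 - a = k + 1 - a by omega, hd]
    unfold FF
    match_scalars <;> ring1
  have hU : ∑ p ∈ Finset.range (k + 1), UU Pi Γ k r (p + 1)
      = ∑ a ∈ Finset.range (k + 1 + 1), UU Pi Γ k r a := by
    rw [Finset.sum_range_succ' (fun a => UU Pi Γ k r a) (k + 1), hu0, add_zero]
  have hV : ∑ p ∈ Finset.range (k + 1), VV Pi Γ k r p
      = ∑ a ∈ Finset.range (k + 1 + 1), VV Pi Γ k r a - VV Pi Γ k r (k + 1) := by
    rw [Finset.sum_range_succ (fun p => VV Pi Γ k r p) (k + 1)]; abel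
  have hsum : (∑ a ∈ Finset.range (k + 1 + 1), UU Pi Γ k r a)
        + ∑ a ∈ Finset.range (k + 1 + 1), VV Pi Γ k r a
      = (∑ a ∈ Finset.range (k + 1 + 1), FF Pi Γ k r a) + VV Pi Γ k r (k + 1) := by
    rw [← Finset.sum_add_distrib,
      Finset.sum_range_succ (fun a => UU Pi Γ k r a + VV Pi Γ k r a) (k + 1),
      Finset.sum_range_succ (fun a => FF Pi Γ k r a) (k + 1),
      Finset.sum_range_succ' (fun a => UU Pi Γ k r a + VV Pi Γ k r a) k,
      Finset.sum_range_succ' (fun a => FF Pi Γ k r a) k]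
    have hmid' : ∑ i ∈ Finset.range k, (UU Pi Γ k r (i + 1) + VV Pi Γ k r (i + 1))
        = ∑ i ∈ Finset.range k, FF Pi Γ k r (i + 1) :=
      Finset.sum_congr rfl fun i hi => hmid i (Finset.mem_range.mp hi)
    rw [hmid', hu0, zero_add, h0, hend]
    abel
  rw [show 2 * (k + r + 2) - (k + 1) = k + 2 * r + 3 by omega,
    show k + r + 2 - (k + 1) = r + 1 by omega]
  calc cL (Ω (k + 1)) + cR (Ω (k + 1))
      = ∑ p ∈ Finset.range (k + 1),
          cN (k + r + 2) (k + 1) p • (cL (Υ p (k + 1 - 1 - p)) + cR (Υ p (k + 1 - 1 - p))) := hA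
    _ = ∑ p ∈ Finset.range (k + 1), (UU Pi Γ k r (p + 1) + VV Pi Γ k r p) :=
        Finset.sum_congr rfl hB
    _ = (∑ a ∈ Finset.range (k + 1 + 1), UU Pi Γ k r a)
          + ((∑ a ∈ Finset.range (k + 1 + 1), VV Pi Γ k r a) - VV Pi Γ k r (k + 1)) := by
        rw [Finset.sum_add_distrib, hU, hV]
    _ = ∑ a ∈ Finset.range (k + 1 + 1), FF Pi Γ k r a := by
        linear_combination (norm := module) hsum
    _ = (-((((k + 2 * r + 3) * (r + 1) : ℕ)) : ℝ)) • d (Ω (k + 1 + 1)) := hE.symm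
end
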